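/- Let q = p^t with p prime, and suppose n ≡ 1 (mod q), μ·q^n/((q-1)n+1) = p^k for some integer 0 ≤ k < nt, and μ ≥ 1. Set m = nt - k. Then there exists a (μ-1, μ)-spread of t-multisubspaces of F_p^m, and hence an F_p-linear (additive, when t > 1) μ-fold 1-perfect code in H(n,q). -/

import Mathlib

noncomputable def spanCount {K : Type} [Field K] {m t : ℕ} (T : Fin t → Fin m → K)
    (u : Fin m → K) : ℕ :=
  Nat.card {a : Fin t → K // ∑ j, a j • T j = u}

def IsMultispread {K : Type} [Field K] [DecidableEq K] {m t n : ℕ}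
    (T : Fin n → Fin t → Fin m → K) (lam mu : ℕ) : Prop :=
  ∀ u : Fin m → K, (∑ i, spanCount (T i) u) = if u = 0 then n + lam else mu

def synd {p t m n : ℕ} [Fact p.Prime] (T : Fin n → Fin t → Fin m → ZMod p)
    (x : Fin n → Fin t → ZMod p) : Fin m → ZMod p :=
  ∑ i, ∑ j, x i j • T i j

/-!
The spread is assembled from linear maps `L i : 𝔽_p^t → 𝔽_p^m`, keeping track only of how many
pairs `(i, v)` satisfy `L i v = w`. These counts add under disjoint unions and are multiplied by
`|ker g|` under composition with a surjection `g`. Two families do the work: the lines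
`c ↦ c • v` of `GF(p^t)^r` projected onto `𝔽_p^m` (for `m ≤ r t`) hit every nonzero vector
`p^(r t - m)` times, and the maps `v ↦ a * ψ v` (`a ∈ GF(p^m)`, `ψ : 𝔽_p^t ↪ GF(p^m)`) hit every
nonzero vector `p^t - 1` times. For `m ≤ t`, `n ≡ 1 (mod p^t)` forces `μ = β p^(t - m)`, and `β`
projections plus `(n - 1) / p^t` zero maps suffice. For `m ≥ t`, choose `r` with
`0 ≤ r t - m < t`; then `μ ≡ p^(r t - m) (mod p^t - 1)`, so `μ = p^(r t - m) + α (p^t - 1)`, and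
one projected line spread plus `α` copies of the multiplicative family consist of exactly `n` maps.

The code `ker (y ↦ ∑ i, L i (y i))` is then `μ`-fold `1`-perfect: the neighbour of `x` obtained
by adding `a` in block `i` is a codeword iff `L i a = -∑ j, L j (x j)`, and summing over `i`
counts the preimages of that vector.
-/

open Function
open scoped LinearAlgebra.Projectivization

theorem card_fiber_comp_eq_sum {V W W' : Type*} [Finite V] [Fintype W] [DecidableEq W']
    (f : V → W) (g : W → W') (u : W') :
    Nat.card {v // g (f v) = u} = ∑ w : {w // g w = u}, Nat.card {v // f v = w} := by
  rw [← Nat.card_sigma]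
  exact Nat.card_congr
    { toFun := fun v => ⟨⟨f v, v.2⟩, v, rfl⟩
      invFun := fun x => ⟨x.2, by rw [x.2.2]; exact x.1.2⟩
      left_inv := fun _ => rfl
      right_inv := fun x => Sigma.subtype_ext (Subtype.ext x.2.2) rfl }

section Hamming

variable {ι β : Type*} [Fintype ι] [DecidableEq ι] [DecidableEq β]

theorem hammingDist_update_of_ne {x : ι → β} {i : ι} {b : β} (hb : b ≠ x i) :
    hammingDist x (update x i b) = 1 := by
  refine Finset.card_eq_one.mpr ⟨i, Finset.ext fun j => ?_⟩
  by_cases hj : j = i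
  · subst hj
    simp [Ne.symm hb]
  · simp [hj]

theorem exists_update_of_hammingDist_eq_one {x y : ι → β} (h : hammingDist x y = 1) :
    ∃ i, y i ≠ x i ∧ update x i (y i) = y := by
  obtain ⟨i, hi⟩ := Finset.card_eq_one.mp h
  have hmem : ∀ j, x j ≠ y j ↔ j = i := fun j => by
    simpa using congrArg (j ∈ ·) hi
  refine ⟨i, fun h => (hmem i).mpr rfl h.symm, update_eq_iff.mpr ⟨rfl, fun j hj => ?_⟩⟩
  exact not_not.mp fun h => hj ((hmem j).mp h)

theorem add_sum_sum_update [Fintype β] {M : Type*} [AddCommMonoid M] (f : (ι → β) → M) (x : ι → β) :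
    f x + ∑ i, ∑ b, f (update x i b)
      = Fintype.card ι • f x + ∑ y with hammingDist x y ≤ 1, f y := by
  have hrow : ∀ i, ∑ b, f (update x i b)
      = f x + ∑ b with b ≠ x i, f (update x i b) := fun i => by
    rw [← Finset.add_sum_erase _ _ (Finset.mem_univ (x i)), update_eq_self,
      Finset.filter_ne']
  have hball : ∑ y with hammingDist x y ≤ 1, f y = f x + ∑ y with hammingDist x y = 1, f y := by
    rw [← Finset.sum_filter_add_sum_filter_not _ (fun y => y = x), Finset.filter_filter,
      Finset.filter_filter]
    congr 1
    · rw [Finset.sum_eq_single_of_mem x (by simp) (by simp +contextual)]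
    · congr 1
      ext y
      simp only [Finset.mem_filter, Finset.mem_univ, true_and]
      rw [← Ne, ne_comm, ← hammingDist_ne_zero]
      omega
  have hsphere : ∑ i, ∑ b with b ≠ x i, f (update x i b)
      = ∑ y with hammingDist x y = 1, f y := by
    rw [Finset.sum_sigma']
    refine Finset.sum_bij (fun σ _ => update x σ.1 σ.2) ?_ ?_ ?_ fun _ _ => rfl
    · intro σ hσ
      simpa using hammingDist_update_of_ne (Finset.mem_filter.mp (Finset.mem_sigma.mp hσ).2).2
    · rintro ⟨i, b⟩ hσ ⟨i', b'⟩ hσ' h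
      simp only [Finset.mem_sigma, Finset.mem_filter, Finset.mem_univ, true_and] at hσ hσ' h
      obtain rfl : i = i' := by
        by_contra hii
        exact hσ (by simpa [hii] using congrFun h i)
      simpa using congrFun h i
    · intro y hy
      obtain ⟨i, hi, hy⟩ := exists_update_of_hammingDist_eq_one (Finset.mem_filter.mp hy).2
      exact ⟨⟨i, y i⟩, by simpa using hi, hy⟩
  rw [Finset.sum_congr rfl fun i _ => hrow i, Finset.sum_add_distrib, hsphere, hball,
    Finset.sum_const, Finset.card_univ]
  abel

end Hamming

section LinearMap

variable {R V W : Type*} [Ring R] [AddCommGroup V] [Module R V] [AddCommGroup W] [Module R W]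

theorem card_fiber_of_surjective {g : V →ₗ[R] W} (hg : Surjective g) (u : W) :
    Nat.card {v // g v = u} = Nat.card (LinearMap.ker g) := by
  obtain ⟨v₀, rfl⟩ := hg u
  exact Nat.card_congr
    { toFun := fun v => ⟨v - v₀, by simp [v.2]⟩
      invFun := fun k => ⟨k + v₀, by simp [LinearMap.mem_ker.mp k.2]⟩
      left_inv := fun v => by simp
      right_inv := fun k => by simp }

theorem card_ker_mul_card_of_surjective {g : V →ₗ[R] W} (hg : Surjective g) :
    Nat.card (LinearMap.ker g) * Nat.card W = Nat.card V := by
  rw [Submodule.card_eq_card_quotient_mul_card (LinearMap.ker g),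
    Nat.card_congr (g.quotKerEquivOfSurjective hg).toEquiv]

theorem sum_smul_map_single {t : ℕ} (L : (Fin t → R) →ₗ[R] W) (a : Fin t → R) :
    ∑ j, a j • L (Pi.single j 1) = L a := by
  conv_rhs => rw [← (Pi.basisFun R (Fin t)).sum_repr a]
  simp only [map_sum, map_smul, Pi.basisFun_repr, Pi.basisFun_apply]

end LinearMap

section FiniteDimensional

variable {K V W : Type*} [Field K] [AddCommGroup V] [Module K V] [AddCommGroup W] [Module K W]

theorem exists_injective_linearMap_of_le_finrank [FiniteDimensional K W] {t : ℕ}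
    (h : t ≤ Module.finrank K W) : ∃ ψ : (Fin t → K) →ₗ[K] W, Injective ψ := by
  let b := Module.finBasis K W
  refine ⟨b.equivFun.symm.toLinearMap ∘ₗ ExtendByZero.linearMap K (Fin.castLE h), ?_⟩
  exact b.equivFun.symm.injective.comp (extend_injective (Fin.castLE_injective h) 0)

theorem exists_surjective_linearMap_of_le_finrank [FiniteDimensional K V] {m : ℕ}
    (h : m ≤ Module.finrank K V) : ∃ g : V →ₗ[K] (Fin m → K), Surjective g :=
  ⟨LinearMap.funLeft K K (Fin.castLE h) ∘ₗ (Module.finBasis K V).equivFun.toLinearMap,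
    (LinearMap.funLeft_surjective_of_injective K K _ (Fin.castLE_injective h)).comp
      (Module.finBasis K V).equivFun.surjective⟩

end FiniteDimensional

section MultiCover

variable {R V W W' : Type*} [Ring R] [AddCommGroup V] [Module R V] [AddCommGroup W] [Module R W]
  [AddCommGroup W'] [Module R W'] [DecidableEq W]

/-- When `e + 1` is the number of maps, this says that the images of the `L i` form a
`(μ - 1, μ)`-spread of multisubspaces. -/
def IsMultiCover {ι : Type*} [Fintype ι] (L : ι → V →ₗ[R] W) (μ e : ℕ) : Prop :=
  ∀ w, ∑ i, Nat.card {v // L i v = w} = μ + if w = 0 then e else 0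

variable {ι κ : Type*} [Fintype ι] [Fintype κ] {L : ι → V →ₗ[R] W} {μ e : ℕ}

theorem IsMultiCover.sum_elim (hL : IsMultiCover L μ e) {L' : κ → V →ₗ[R] W} {μ' e' : ℕ}
    (hL' : IsMultiCover L' μ' e') : IsMultiCover (Sum.elim L L') (μ + μ') (e + e') := by
  intro w
  rw [Fintype.sum_sum_type]
  simp only [Sum.elim_inl, Sum.elim_inr, hL w, hL' w]
  split_ifs <;> ring

theorem IsMultiCover.replicate (hL : IsMultiCover L μ e) (κ : Type*) [Fintype κ] :
    IsMultiCover (fun c : κ × ι => L c.2) (Fintype.card κ * μ) (Fintype.card κ * e) := by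
  intro w
  rw [Fintype.sum_prod_type]
  simp only [hL w, Finset.sum_const, Finset.card_univ, smul_eq_mul]
  split_ifs <;> ring

theorem IsMultiCover.exists_fin (hL : IsMultiCover L μ e) {n : ℕ} (hn : Fintype.card ι = n) :
    ∃ L' : Fin n → V →ₗ[R] W, IsMultiCover L' μ e := by
  let σ := (Fintype.equivFinOfCardEq hn).symm
  exact ⟨L ∘ σ, fun w => by rw [← hL w]; exact σ.sum_comp fun i => Nat.card {v // L i v = w}⟩

theorem IsMultiCover.comp_linearEquiv {V' : Type*} [AddCommGroup V'] [Module R V']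
    (hL : IsMultiCover L μ e) (δ : V' ≃ₗ[R] V) :
    IsMultiCover (fun i => L i ∘ₗ δ.toLinearMap) μ e := fun w => by
  rw [← hL w]
  exact Finset.sum_congr rfl fun i _ =>
    Nat.card_congr (δ.toEquiv.subtypeEquiv fun _ => Iff.rfl)

theorem IsMultiCover.comp_surjective [Finite V] [Fintype W] [DecidableEq W']
    (hL : IsMultiCover L μ e) {g : W →ₗ[R] W'} (hg : Surjective g) :
    IsMultiCover (fun i => g ∘ₗ L i) (Nat.card (LinearMap.ker g) * μ) e := by
  intro u
  have hzero : ∑ w : {w // g w = u}, (if (w : W) = 0 then e else 0) = if u = 0 then e else 0 := by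
    by_cases hu : u = 0
    · subst hu
      rw [Fintype.sum_eq_single (⟨0, map_zero g⟩ : {w // g w = 0})]
      · simp
      · exact fun w hw => if_neg fun h => hw (Subtype.ext h)
    · rw [if_neg hu]
      exact Finset.sum_eq_zero fun w _ => if_neg fun h => hu (by rw [← w.2, h, map_zero])
  simp only [LinearMap.coe_comp, comp_apply, card_fiber_comp_eq_sum]
  rw [Finset.sum_comm]
  simp only [hL _, Finset.sum_add_distrib, Finset.sum_const, Finset.card_univ, smul_eq_mul, hzero,
    Fintype.card_eq_nat_card, card_fiber_of_surjective hg]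

theorem isMultiCover_zero [Finite V] :
    IsMultiCover (fun _ : Unit => (0 : V →ₗ[R] W)) 0 (Nat.card V) := by
  intro w
  by_cases hw : w = 0
  · subst hw
    simp
  · simp [hw, eq_comm]

theorem IsMultiCover.card_ker_inter_ball [DecidableEq ι] [Fintype V] [DecidableEq V]
    (hL : IsMultiCover L μ e) (he : e + 1 = Fintype.card ι) (x : ι → V) :
    Nat.card {y : ι → V // ∑ i, L i (y i) = 0 ∧ hammingDist x y ≤ 1} = μ := by
  obtain ⟨s, hs⟩ : ∃ s, ∑ i, L i (x i) = s := ⟨_, rfl⟩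
  let f : (ι → V) → ℕ := fun y => if ∑ i, L i (y i) = 0 then 1 else 0
  have hshift : ∀ i a, ∑ j, L j (update x i (x i + a) j) = s + L i a := by
    intro i a
    have hupdate : update x i (x i + a) = x + Pi.single i a := by
      ext j
      by_cases hj : j = i
      · subst hj; simp
      · simp [hj]
    have hsingle : ∑ j, L j ((Pi.single i a : ι → V) j) = L i a := by
      rw [Fintype.sum_eq_single i fun j hj => by rw [Pi.single_eq_of_ne hj, map_zero],
        Pi.single_eq_same]
    simp only [hupdate, Pi.add_apply, map_add, Finset.sum_add_distrib, hsingle, hs]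
  have hrow : ∀ i, ∑ b, f (update x i b) = Nat.card {a // L i a = -s} := by
    intro i
    rw [← Equiv.sum_comp (Equiv.addLeft (x i)), Nat.card_eq_fintype_card, Fintype.card_subtype,
      Finset.card_filter]
    refine Finset.sum_congr rfl fun a _ => ?_
    simp only [f, Equiv.coe_addLeft, hshift, eq_neg_iff_add_eq_zero, add_comm (L i a)]
  have hball : ∑ y with hammingDist x y ≤ 1, f y
      = Nat.card {y : ι → V // ∑ i, L i (y i) = 0 ∧ hammingDist x y ≤ 1} := by
    rw [Finset.sum_boole, Nat.card_eq_fintype_card, Fintype.card_subtype, Finset.filter_filter]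
    simp only [Nat.cast_id, and_comm]
  have key := add_sum_sum_update f x
  rw [Finset.sum_congr rfl fun i _ => hrow i, hL, hball, ← he] at key
  simp only [f, hs, neg_eq_zero, smul_eq_mul] at key
  split_ifs at key <;> omega

end MultiCover

section Spreads

variable {K F V : Type*} [Field K] [Field F] [Algebra K F] [AddCommGroup V] [Module K V]

theorem isMultiCover_mulLeft [Fintype F] [DecidableEq F] [Finite V] {ψ : V →ₗ[K] F}
    (hψ : Injective ψ) :
    IsMultiCover (fun a : F => LinearMap.mulLeft K a ∘ₗ ψ) (Nat.card V - 1) (Nat.card F) := by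
  intro u
  have hψ0 : ∀ v, ψ v = 0 ↔ v = 0 := fun v => by rw [← map_zero ψ, hψ.eq_iff]
  simp only [LinearMap.coe_comp, comp_apply, LinearMap.mulLeft_apply]
  by_cases hu : u = 0
  · subst hu
    have hfib : ∀ a : F,
        Nat.card {v : V // a * ψ v = 0} = 1 + if a = 0 then Nat.card V - 1 else 0 := by
      intro a
      by_cases ha : a = 0
      · subst ha
        have := Nat.card_pos (α := V)
        simp only [zero_mul, Nat.card_subtype_true, if_true]
        omega
      · simp [ha, hψ0]
    simp only [hfib, Finset.sum_add_distrib, Finset.sum_ite_eq', Finset.mem_univ, if_true,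
      Finset.sum_const, Finset.card_univ, smul_eq_mul, mul_one, Nat.card_eq_fintype_card]
    omega
  · rw [if_neg hu, add_zero, ← Nat.card_sigma]
    have hne : ∀ x : (a : F) × {v : V // a * ψ v = u}, ψ x.2 ≠ 0 :=
      fun x h => hu (by rw [← x.2.2, h, mul_zero])
    calc Nat.card ((a : F) × {v : V // a * ψ v = u}) = Nat.card {v : V // v ≠ 0} :=
          Nat.card_congr
            { toFun := fun x => ⟨x.2, (hψ0 _).not.mp (hne x)⟩
              invFun := fun v => ⟨u * (ψ v)⁻¹, v, by field_simp [(hψ0 v).not.mpr v.2]⟩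
              left_inv := fun x =>
                Sigma.subtype_ext ((eq_mul_inv_iff_mul_eq₀ (hne x)).mpr x.2.2).symm rfl
              right_inv := fun _ => rfl }
      _ = Nat.card V - 1 := by
        classical
        have := Fintype.ofFinite V
        simp [Nat.card_eq_fintype_card]

theorem isMultiCover_projectivization [Module F V] [IsScalarTower K F V] [Finite F] [Finite V]
    [Nontrivial V] [DecidableEq V] [Fintype (ℙ F V)] :
    IsMultiCover (fun P : ℙ F V => (LinearMap.toSpanSingleton F V P.rep).restrictScalars K)
      1 (Nat.card (ℙ F V) - 1) := by
  intro w
  simp only [LinearMap.restrictScalars_apply, LinearMap.toSpanSingleton_apply]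
  by_cases hw : w = 0
  · subst hw
    obtain ⟨v, hv⟩ := exists_ne (0 : V)
    have : Nonempty (ℙ F V) := ⟨.mk F v hv⟩
    have hpos := Nat.card_pos (α := ℙ F V)
    simp only [Nat.card_eq_fintype_card, smul_eq_zero, Projectivization.rep_nonzero, or_false,
      Fintype.card_unique, Finset.sum_const, Finset.card_univ, smul_eq_mul, mul_one, if_true]
      at hpos ⊢
    omega
  · rw [if_neg hw, add_zero, ← Nat.card_sigma, Nat.card_eq_one_iff_exists]
    obtain ⟨a, ha⟩ := Projectivization.exists_smul_eq_mk_rep F w hw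
    refine ⟨⟨.mk F w hw, (a⁻¹ : Fˣ), by rw [← ha, Units.smul_def, smul_smul]; simp⟩, ?_⟩
    rintro ⟨P, c, hc⟩
    have hc0 : c ≠ 0 := by rintro rfl; exact hw (by rw [← hc, zero_smul])
    obtain rfl : P = .mk F w hw := by
      rw [← Projectivization.mk_rep P, Projectivization.mk_eq_mk_iff']
      exact ⟨c⁻¹, by rw [← hc, smul_smul, inv_mul_cancel₀ hc0, one_smul]⟩
    have hca : c • (Projectivization.mk F w hw).rep
        = ((a⁻¹ : Fˣ) : F) • (Projectivization.mk F w hw).rep := by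
      rw [hc, ← ha, Units.smul_def, smul_smul, ← Units.val_mul, inv_mul_cancel, Units.val_one,
        one_smul]
    exact Sigma.subtype_ext rfl (smul_left_injective F (Projectivization.rep_nonzero _) hca)

end Spreads

theorem IsMultiCover.isMultispread {K : Type} [Field K] [DecidableEq K] {m t n μ e : ℕ}
    {L : Fin n → (Fin t → K) →ₗ[K] (Fin m → K)} (hL : IsMultiCover L μ e) (hμ : 0 < μ)
    (he : e + 1 = n) : IsMultispread (fun i j => L i (Pi.single j 1)) (μ - 1) μ := by
  intro u
  simp only [spanCount, sum_smul_map_single, hL u]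
  split_ifs <;> omega

theorem exists_le_mul_lt_add (m : ℕ) {t : ℕ} (ht : 0 < t) : ∃ r, m ≤ r * t ∧ r * t < m + t := by
  refine ⟨(m + t - 1) / t, ?_⟩
  have hdiv := Nat.div_add_mod (m + t - 1) t
  have hmod := Nat.mod_lt (m + t - 1) ht
  rw [mul_comm]
  omega

theorem exists_eq_add_mul_of_mul_eq {Q μ c n N P : ℕ} (hc : 0 < c) (hcQ : c ≤ Q) (hμ : 0 < μ)
    (hcP : c * P = N * Q + 1) (h : μ * P = Q * n + 1) : ∃ α, μ = c + α * Q ∧ n = α * P + N := by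
  have hmul_add : ∀ a b, Q * a + b ≡ b [MOD Q] := fun a b => by simp [Nat.ModEq]
  have hmod : μ ≡ c [MOD Q] :=
    calc μ ≡ Q * (μ * N) + μ [MOD Q] := (hmul_add _ _).symm
      _ = Q * (c * n) + c := by linear_combination c * h - μ * hcP
      _ ≡ c [MOD Q] := hmul_add _ _
  have hle : c ≤ μ := by
    by_contra hlt
    have := Nat.le_of_dvd (by omega) ((Nat.modEq_iff_dvd' (by omega)).mp hmod)
    omega
  obtain ⟨α, hα⟩ := (Nat.modEq_iff_dvd' hle).mp hmod.symm
  have hμα : μ = c + α * Q := by rw [mul_comm] at hα; omega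
  refine ⟨α, hμα, Nat.eq_of_mul_eq_mul_left (show 0 < Q by omega) ?_⟩
  linear_combination -h + P * hμα + hcP

section GaloisField

variable (p : ℕ) [hp : Fact p.Prime]

theorem exists_isMultiCover_mulLeft_of_le {t m : ℕ} (ht : 0 < t) (htm : t ≤ m) :
    ∃ L : Fin (p ^ m) → (Fin t → ZMod p) →ₗ[ZMod p] (Fin m → ZMod p),
      IsMultiCover L (p ^ t - 1) (p ^ m) := by
  classical
  have hm : m ≠ 0 := by omega
  let _ : Fintype (GaloisField p m) := Fintype.ofFinite _
  let φ : GaloisField p m ≃ₗ[ZMod p] (Fin m → ZMod p) :=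
    LinearEquiv.ofFinrankEq _ _ (by simp [GaloisField.finrank p hm])
  obtain ⟨ψ, hψ⟩ := exists_injective_linearMap_of_le_finrank (K := ZMod p)
    (W := GaloisField p m) (t := t) (by rwa [GaloisField.finrank p hm])
  obtain ⟨L, hL⟩ := ((isMultiCover_mulLeft hψ).comp_surjective φ.surjective).exists_fin
    (by rw [Fintype.card_eq_nat_card, GaloisField.card p m hm])
  refine ⟨L, ?_⟩
  rwa [LinearEquiv.ker, Nat.card_unique, one_mul, GaloisField.card p m hm, Nat.card_fun,
    Nat.card_zmod, Nat.card_fin] at hL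

theorem exists_isMultiCover_lines_of_le_mul {t m r N : ℕ} (ht : 0 < t) (hr : 0 < r)
    (hmr : m ≤ r * t) (hN : N * (p ^ t - 1) + 1 = p ^ (r * t)) :
    ∃ L : Fin N → (Fin t → ZMod p) →ₗ[ZMod p] (Fin m → ZMod p),
      IsMultiCover L (p ^ (r * t - m)) (N - 1) := by
  classical
  have : Nonempty (Fin r) := ⟨⟨0, hr⟩⟩
  let _ : Fintype (GaloisField p t) := Fintype.ofFinite _
  let _ : Fintype (ℙ (GaloisField p t) (Fin r → GaloisField p t)) := Fintype.ofFinite _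
  let δ : (Fin t → ZMod p) ≃ₗ[ZMod p] GaloisField p t :=
    LinearEquiv.ofFinrankEq _ _ (by simp [GaloisField.finrank p ht.ne'])
  obtain ⟨g, hg⟩ := exists_surjective_linearMap_of_le_finrank (K := ZMod p)
    (V := Fin r → GaloisField p t) (m := m)
    (by rw [Module.finrank_pi_fintype]; simpa [GaloisField.finrank p ht.ne'] using hmr)
  have hcardU : Nat.card (Fin r → GaloisField p t) = p ^ (r * t) := by
    rw [Nat.card_fun, GaloisField.card p t ht.ne', Nat.card_fin, ← pow_mul, mul_comm]
  have hker : Nat.card (LinearMap.ker g) = p ^ (r * t - m) := by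
    refine Nat.eq_of_mul_eq_mul_right (pow_pos hp.out.pos m) ?_
    rw [pow_sub_mul_pow p hmr, ← hcardU, ← card_ker_mul_card_of_surjective hg, Nat.card_fun,
      Nat.card_zmod, Nat.card_fin]
  have hlines : Nat.card (ℙ (GaloisField p t) (Fin r → GaloisField p t)) = N := by
    refine Nat.eq_of_mul_eq_mul_right (Nat.sub_pos_of_lt (Nat.one_lt_pow ht.ne' hp.out.one_lt)) ?_
    have := Projectivization.card' (GaloisField p t) (Fin r → GaloisField p t)
    rw [hcardU, GaloisField.card p t ht.ne'] at this
    omega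
  obtain ⟨L, hL⟩ := (((isMultiCover_projectivization (K := ZMod p)).comp_surjective
    hg).comp_linearEquiv δ).exists_fin (by rw [Fintype.card_eq_nat_card, hlines])
  exact ⟨L, by rwa [hker, mul_one, hlines] at hL⟩

theorem exists_isMultiCover_of_le {t m n μ : ℕ} (ht : 0 < t) (hmt : m ≤ t)
    (hn : n ≡ 1 [MOD p ^ t]) (hn0 : 0 < n) (hN : μ * p ^ m = (p ^ t - 1) * n + 1) :
    ∃ L : Fin n → (Fin t → ZMod p) →ₗ[ZMod p] (Fin m → ZMod p), IsMultiCover L μ (n - 1) := by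
  obtain ⟨w, hw⟩ : p ^ t ∣ n - 1 := (Nat.modEq_iff_dvd' hn0).mp hn.symm
  obtain ⟨Q, hQ⟩ := Nat.exists_eq_add_one_of_ne_zero (pow_ne_zero t hp.out.ne_zero)
  rw [hQ, Nat.add_sub_cancel] at hN
  have hnw : n = (Q + 1) * w + 1 := by rw [← hQ]; omega
  have hμ : μ = (Q * w + 1) * p ^ (t - m) := by
    refine Nat.eq_of_mul_eq_mul_right (pow_pos hp.out.pos m) ?_
    linear_combination hN + Q * hnw - (Q * w + 1) * ((pow_sub_mul_pow p hmt).trans hQ)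
  obtain ⟨L₁, hL₁⟩ := exists_isMultiCover_lines_of_le_mul p (m := m) (N := 1) ht one_pos
    (by omega) (by rw [one_mul, one_mul]; omega)
  obtain ⟨L, hL⟩ := ((hL₁.replicate (Fin (Q * w + 1))).sum_elim
    ((isMultiCover_zero (V := Fin t → ZMod p) (W := Fin m → ZMod p)).replicate (Fin w))).exists_fin
    (n := n) (by
      rw [Fintype.card_sum, Fintype.card_prod, Fintype.card_prod, Fintype.card_fin,
        Fintype.card_fin, Fintype.card_fin, Fintype.card_unique, hnw]
      ring)
  refine ⟨L, ?_⟩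
  convert hL using 1
  · simp only [Fintype.card_fin, one_mul, mul_zero, add_zero, hμ]
  · simp only [Fintype.card_fin, Nat.sub_self, mul_zero, zero_add, Nat.card_fun, Nat.card_zmod,
      Nat.card_fin, hQ, hnw]
    ring_nf
    omega

theorem exists_isMultiCover_of_ge {t m n μ : ℕ} (ht : 0 < t) (htm : t ≤ m) (hμ : 0 < μ)
    (hN : μ * p ^ m = (p ^ t - 1) * n + 1) :
    ∃ L : Fin n → (Fin t → ZMod p) →ₗ[ZMod p] (Fin m → ZMod p), IsMultiCover L μ (n - 1) := by
  obtain ⟨r, hmr, hrm⟩ := exists_le_mul_lt_add m ht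
  have hr : 0 < r := Nat.pos_of_ne_zero fun h => by simp [h] at hmr; omega
  have hdvd : p ^ t - 1 ∣ p ^ (r * t) - 1 := by
    simpa only [one_pow, pow_mul'] using Nat.sub_dvd_pow_sub_pow (p ^ t) 1 r
  have hlines : 0 < (p ^ (r * t) - 1) / (p ^ t - 1) :=
    Nat.div_pos (Nat.sub_le_sub_right (Nat.pow_le_pow_right hp.out.pos (htm.trans hmr)) 1)
      (Nat.sub_pos_of_lt (Nat.one_lt_pow ht.ne' hp.out.one_lt))
  have hpow : p ^ (r * t - m) < p ^ t := Nat.pow_lt_pow_right hp.out.one_lt (by omega)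
  obtain ⟨α, rfl, rfl⟩ := exists_eq_add_mul_of_mul_eq (Q := p ^ t - 1) (c := p ^ (r * t - m))
    (P := p ^ m) (pow_pos hp.out.pos _) (by omega) hμ
    (by rw [pow_sub_mul_pow p hmr, Nat.div_mul_cancel hdvd,
      Nat.sub_add_cancel (Nat.one_le_pow _ _ hp.out.pos)]) (by rw [hN, mul_comm])
  obtain ⟨L₁, hL₁⟩ := exists_isMultiCover_mulLeft_of_le p ht htm
  obtain ⟨L₂, hL₂⟩ := exists_isMultiCover_lines_of_le_mul p ht hr hmr
    (Nat.div_mul_cancel hdvd ▸ Nat.sub_add_cancel (Nat.one_le_pow _ _ hp.out.pos))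
  obtain ⟨L, hL⟩ := (hL₂.sum_elim (hL₁.replicate (Fin α))).exists_fin
    (n := α * p ^ m + (p ^ (r * t) - 1) / (p ^ t - 1)) (by
      rw [Fintype.card_sum, Fintype.card_prod, Fintype.card_fin, Fintype.card_fin,
        Fintype.card_fin, add_comm])
  rw [Fintype.card_fin] at hL
  refine ⟨L, ?_⟩
  convert hL using 1
  omega

end GaloisField

/-- Sufficiency: if n ≡ 1 (mod q), q = p^t, and μ·q^n/((q-1)n+1) = p^k, then
    (with m = nt - k) there is a (μ-1,μ)-spread of t-multisubspaces of F_p^m,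
    and hence an F_p-linear μ-fold 1-perfect code in H(n,q). -/
theorem stmt_18 (p t n μ k : ℕ) [hp : Fact p.Prime] (ht : 0 < t) (hμ : 0 < μ)
    (hn : n ≡ 1 [MOD p ^ t]) (hk : k < n * t)
    (h : μ * (p ^ t) ^ n = ((p ^ t - 1) * n + 1) * p ^ k) :
    ∃ T : Fin n → Fin t → Fin (n * t - k) → ZMod p,
      IsMultispread T (μ - 1) μ ∧
      ∀ x : Fin n → Fin t → ZMod p,
        Nat.card {y : Fin n → Fin t → ZMod p //
          synd T y = 0 ∧ hammingDist x y ≤ 1} = μ := by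
  have hn0 : 0 < n := Nat.pos_of_ne_zero fun h0 => by simp [h0] at hk
  have hN : μ * p ^ (n * t - k) = (p ^ t - 1) * n + 1 := by
    refine Nat.eq_of_mul_eq_mul_right (pow_pos hp.out.pos k) ?_
    rw [mul_assoc, ← pow_add, Nat.sub_add_cancel hk.le, mul_comm n t, pow_mul, h]
  obtain ⟨L, hL⟩ : ∃ L : Fin n → (Fin t → ZMod p) →ₗ[ZMod p] (Fin (n * t - k) → ZMod p),
      IsMultiCover L μ (n - 1) := by
    rcases le_total (n * t - k) t with hmt | htm
    · exact exists_isMultiCover_of_le p ht hmt hn hn0 hN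
    · exact exists_isMultiCover_of_ge p ht htm hμ hN
  refine ⟨fun i j => L i (Pi.single j 1), hL.isMultispread hμ (by omega), fun x => ?_⟩
  simpa only [synd, sum_smul_map_single] using
    hL.card_ker_inter_ball (by rw [Fintype.card_fin]; omega) x
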